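/- arXiv:2509.21202 — 3 statements merged into one kernel-verified Lean document; each statement's English description precedes it below -/
import Mathlib

section
/- Let a ∈ [0,1] and L ∈ ℕ. If f is L times continuously differentiable on [M₁, M₂], where M₁, M₂ ∈ ℤ with M₂ > M₁, then Σ_{m=M₁}^{M₂−1} f(m+a) = ∫_{M₁}^{M₂} f(x) dx − Σ_{m=0}^{L−1} (B_{m+1}(a)/(m+1)!)·( f^{(m)}(M₁) − f^{(m)}(M₂) ) + ((−1)^{L+1}/L!) ∫_{M₁}^{M₂} B̃_L(x−a) f^{(L)}(x) dx. -/
open scoped Real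
open Filter MeasureTheory

noncomputable section

/-- the Bernoulli polynomial `B_n(x)` evaluated at a real `x` -/
def bern (n : ℕ) (x : ℝ) : ℝ := Polynomial.aeval x (Polynomial.bernoulli n)

/-- the periodized Bernoulli polynomial `B̃_n(x) = B_n(x − ⌊x⌋)` -/
def bernTilde (n : ℕ) (x : ℝ) : ℝ := bern n (Int.fract x)

/-!
On each unit interval `[n, n + 1]` the function `x ↦ B̃_{ℓ+1}(x - a)` is a polynomial except for a
jump of size `B_{ℓ+1}(1) - B_{ℓ+1}(0)` at `x = n + a`, which is `1` for `ℓ = 0` and `0` otherwise;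
away from the jump its derivative is `(ℓ + 1) B̃_ℓ(x - a)`. Integrating `(B̃_{ℓ+1}(x - a) g(x))'`
piecewise over `[M₁, M₂]` therefore produces the jumps `Σ g(m + a)` (only for `ℓ = 0`) and the
boundary term `B_{ℓ+1}(1 - a) (g(M₂) - g(M₁))`. With `g = f^{(ℓ)}`, the case `ℓ = 0` is the formula
for `L = 1`, and for `ℓ ≥ 1` it expresses the remainder of order `ℓ` through that of order `ℓ + 1`,
by the reflection `B_{ℓ+1}(1 - a) = (-1)^{ℓ+1} B_{ℓ+1}(a)`.
-/

open Set Topology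

lemma bern_eq_bernoulliFun : bern = bernoulliFun := by
  ext n x
  simp [bern, bernoulliFun, Polynomial.eval_map_algebraMap]

lemma continuous_bern (n : ℕ) : Continuous (bern n) :=
  bern_eq_bernoulliFun ▸ continuous_bernoulliFun n

lemma hasDerivAt_bern_succ (n : ℕ) (x : ℝ) :
    HasDerivAt (bern (n + 1)) ((n + 1) * bern n x) x := by
  simpa [bern_eq_bernoulliFun] using hasDerivAt_bernoulliFun (n + 1) x

lemma bern_eval_one_sub (n : ℕ) (x : ℝ) : bern n (1 - x) = (-1) ^ n * bern n x := by
  simpa [bern_eq_bernoulliFun] using bernoulliFun_eval_one_sub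

lemma bernTilde_zero (x : ℝ) : bernTilde 0 x = 1 := by
  simp [bernTilde, bern_eq_bernoulliFun]

lemma bern_eval_one (n : ℕ) : bern n 1 = bern n 0 + if n = 1 then 1 else 0 := by
  simpa [bern_eq_bernoulliFun] using bernoulliFun_eval_one n

lemma bernTilde_eq_of_mem_Ico (n : ℕ) {k : ℤ} {y : ℝ} (hy : y ∈ Ico (k : ℝ) (k + 1)) :
    bernTilde n y = bern n (y - k) := by
  have hfract : Int.fract y = y - k :=
    Int.fract_eq_iff.mpr ⟨by linarith [hy.1], by linarith [hy.2], k, by ring⟩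
  rw [bernTilde, hfract]

lemma exists_bound_bernTilde (n : ℕ) : ∃ C, ∀ y, ‖bernTilde n y‖ ≤ C := by
  obtain ⟨C, hC⟩ := isCompact_Icc.exists_bound_of_continuousOn (continuous_bern n).continuousOn
  exact ⟨C, fun y => hC _ ⟨Int.fract_nonneg y, (Int.fract_lt_one y).le⟩⟩

lemma IntervalIntegrable.bernTilde_sub_mul (n : ℕ) (a : ℝ) {g : ℝ → ℝ} {p q : ℝ}
    (hg : IntervalIntegrable g volume p q) :
    IntervalIntegrable (fun x => bernTilde n (x - a) * g x) volume p q := by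
  obtain ⟨C, hC⟩ := exists_bound_bernTilde n
  have hmeas : Measurable fun x => bernTilde n (x - a) :=
    (continuous_bern n).measurable.comp (measurable_id.sub_const a).fract
  exact ⟨hg.1.bdd_mul hmeas.aestronglyMeasurable (ae_of_all _ fun x => hC _),
    hg.2.bdd_mul hmeas.aestronglyMeasurable (ae_of_all _ fun x => hC _)⟩

lemma hasDerivAt_iteratedDerivWithin {n : WithTop ℕ∞} {m : ℕ} {f : ℝ → ℝ} {s : Set ℝ} {x : ℝ}
    (hf : ContDiffOn ℝ n f s) (hmn : m < n) (hs : UniqueDiffOn ℝ s) (hx : s ∈ 𝓝 x) :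
    HasDerivAt (iteratedDerivWithin m f s) (iteratedDerivWithin (m + 1) f s x) x := by
  rw [iteratedDerivWithin_succ]
  exact ((hf.differentiableOn_iteratedDerivWithin hmn hs) x
    (mem_of_mem_nhds hx)).hasDerivWithinAt.hasDerivAt hx

section BernTildeIntegral

variable (ℓ : ℕ) {a : ℝ} {g g' : ℝ → ℝ}

lemma intervalIntegrable_bernTilde_deriv_mul {p q : ℝ} (hpq : p ≤ q)
    (hg : ContinuousOn g (Icc p q)) (hg' : ContinuousOn g' (Icc p q)) :
    IntervalIntegrable
      (fun x => (ℓ + 1) * (bernTilde ℓ (x - a) * g x) + bernTilde (ℓ + 1) (x - a) * g' x)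
      volume p q :=
  (((hg.intervalIntegrable_of_Icc hpq).bernTilde_sub_mul ℓ a).const_mul _).add
    ((hg'.intervalIntegrable_of_Icc hpq).bernTilde_sub_mul (ℓ + 1) a)

lemma integral_bernTilde_deriv_mul_of_sub_mem_Icc {p q : ℝ} {k : ℤ} (hpq : p ≤ q)
    (hp : (k : ℝ) ≤ p - a) (hq : q - a ≤ k + 1)
    (hg : ContinuousOn g (Icc p q)) (hg' : ContinuousOn g' (Icc p q))
    (hd : ∀ x ∈ Ioo p q, HasDerivAt g (g' x) x) :
    ∫ x in p..q, (ℓ + 1) * (bernTilde ℓ (x - a) * g x) + bernTilde (ℓ + 1) (x - a) * g' x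
      = bern (ℓ + 1) (q - a - k) * g q - bern (ℓ + 1) (p - a - k) * g p := by
  refine intervalIntegral.integral_eq_sub_of_hasDeriv_right_of_le hpq
    (((continuous_bern _).comp ((continuous_sub_right a).sub continuous_const)).continuousOn.mul
      hg) (fun x hx => ?_) (intervalIntegrable_bernTilde_deriv_mul ℓ hpq hg hg')
  have hx' : x - a ∈ Ico (k : ℝ) (k + 1) := ⟨by linarith [hx.1], by linarith [hx.2]⟩
  have hB := (hasDerivAt_bern_succ ℓ (x - a - k)).comp x
    (((hasDerivAt_id x).sub_const a).sub_const (k : ℝ))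
  rw [bernTilde_eq_of_mem_Ico ℓ hx', bernTilde_eq_of_mem_Ico (ℓ + 1) hx', ← mul_assoc]
  exact (hB.mul (hd x hx)).hasDerivWithinAt.congr_deriv (by simp)

lemma integral_bernTilde_deriv_mul_unit (ha : a ∈ Icc 0 1) (n : ℤ)
    (hg : ContinuousOn g (Icc n (n + 1))) (hg' : ContinuousOn g' (Icc n (n + 1)))
    (hd : ∀ x ∈ Ioo (n : ℝ) (n + 1), HasDerivAt g (g' x) x) :
    ∫ x in (n : ℝ)..n + 1, (ℓ + 1) * (bernTilde ℓ (x - a) * g x) + bernTilde (ℓ + 1) (x - a) * g' x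
      = (bern (ℓ + 1) 1 - bern (ℓ + 1) 0) * g (n + a)
        + bern (ℓ + 1) (1 - a) * (g (n + 1) - g n) := by
  obtain ⟨ha₀, ha₁⟩ := ha
  have hleft : Icc (n : ℝ) (n + a) ⊆ Icc (n : ℝ) (n + 1) := Icc_subset_Icc le_rfl (by linarith)
  have hright : Icc (n + a) ((n : ℝ) + 1) ⊆ Icc (n : ℝ) (n + 1) :=
    Icc_subset_Icc (by linarith) le_rfl
  -- `x - a` crosses the integer `n` at `x = n + a`, where `B̃_{ℓ+1}(x - a)` jumps
  rw [← intervalIntegral.integral_add_adjacent_intervals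
      (intervalIntegrable_bernTilde_deriv_mul ℓ (by linarith) (hg.mono hleft) (hg'.mono hleft))
      (intervalIntegrable_bernTilde_deriv_mul ℓ (by linarith) (hg.mono hright) (hg'.mono hright)),
    integral_bernTilde_deriv_mul_of_sub_mem_Icc ℓ (k := n - 1) (by linarith)
      (by push_cast; linarith) (by push_cast; linarith) (hg.mono hleft) (hg'.mono hleft)
      (fun x hx => hd x ⟨hx.1, by linarith [hx.2]⟩),
    integral_bernTilde_deriv_mul_of_sub_mem_Icc ℓ (k := n) (by linarith) (by linarith)
      (by linarith) (hg.mono hright) (hg'.mono hright)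
      (fun x hx => hd x ⟨by linarith [hx.1], hx.2⟩)]
  push_cast
  ring_nf

lemma integral_bernTilde_deriv_mul (ha : a ∈ Icc 0 1) {M₁ M₂ : ℤ} (hM : M₁ ≤ M₂)
    (hg : ContinuousOn g (Icc M₁ M₂)) (hg' : ContinuousOn g' (Icc M₁ M₂))
    (hd : ∀ x ∈ Ioo (M₁ : ℝ) M₂, HasDerivAt g (g' x) x) :
    ∫ x in (M₁ : ℝ)..M₂, (ℓ + 1) * (bernTilde ℓ (x - a) * g x) + bernTilde (ℓ + 1) (x - a) * g' x
      = (bern (ℓ + 1) 1 - bern (ℓ + 1) 0) * ∑ m ∈ Finset.Ico M₁ M₂, g (m + a)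
        + bern (ℓ + 1) (1 - a) * (g M₂ - g M₁) := by
  induction M₂, hM using Int.leInduction with
  | base => simp
  | succ M hM ih =>
    push_cast at hg hg' hd ⊢
    have hM' : (M₁ : ℝ) ≤ M := mod_cast hM
    have hleft : Icc (M₁ : ℝ) M ⊆ Icc (M₁ : ℝ) (M + 1) := Icc_subset_Icc le_rfl (by linarith)
    have hright : Icc (M : ℝ) (M + 1) ⊆ Icc (M₁ : ℝ) (M + 1) := Icc_subset_Icc hM' le_rfl
    rw [← intervalIntegral.integral_add_adjacent_intervals
        (intervalIntegrable_bernTilde_deriv_mul ℓ hM' (hg.mono hleft) (hg'.mono hleft))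
        (intervalIntegrable_bernTilde_deriv_mul ℓ (by linarith) (hg.mono hright)
          (hg'.mono hright)),
      ih (hg.mono hleft) (hg'.mono hleft) (fun x hx => hd x ⟨hx.1, by linarith [hx.2]⟩),
      integral_bernTilde_deriv_mul_unit ℓ ha M (hg.mono hright) (hg'.mono hright)
        (fun x hx => hd x ⟨by linarith [hx.1], hx.2⟩),
      Finset.Ico_add_one_right_eq_Icc, ← Finset.Ico_insert_right hM,
      Finset.sum_insert Finset.right_notMem_Ico]
    ring

end BernTildeIntegral

section EulerMaclaurin

variable {a : ℝ} {M₁ M₂ : ℤ} {f : ℝ → ℝ}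

lemma integral_bernTilde_iteratedDerivWithin (ha : a ∈ Icc 0 1) (ℓ : ℕ) (hM : M₁ < M₂)
    (hf : ContDiffOn ℝ (ℓ + 1) f (Icc M₁ M₂)) :
    (ℓ + 1) * (∫ x in (M₁ : ℝ)..M₂,
        bernTilde ℓ (x - a) * iteratedDerivWithin ℓ f (Icc M₁ M₂) x)
      + ∫ x in (M₁ : ℝ)..M₂,
        bernTilde (ℓ + 1) (x - a) * iteratedDerivWithin (ℓ + 1) f (Icc M₁ M₂) x
      = (bern (ℓ + 1) 1 - bern (ℓ + 1) 0)
          * ∑ m ∈ Finset.Ico M₁ M₂, iteratedDerivWithin ℓ f (Icc M₁ M₂) (m + a)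
        + bern (ℓ + 1) (1 - a)
          * (iteratedDerivWithin ℓ f (Icc M₁ M₂) M₂ - iteratedDerivWithin ℓ f (Icc M₁ M₂) M₁) := by
  have hM' : (M₁ : ℝ) < M₂ := mod_cast hM
  have hs := uniqueDiffOn_Icc hM'
  have hg := hf.continuousOn_iteratedDerivWithin (m := ℓ) (mod_cast ℓ.le_succ) hs
  have hg' := hf.continuousOn_iteratedDerivWithin (m := ℓ + 1) le_rfl hs
  rw [← intervalIntegral.integral_const_mul, ← intervalIntegral.integral_add
      (((hg.intervalIntegrable_of_Icc hM'.le).bernTilde_sub_mul ℓ a).const_mul _)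
      ((hg'.intervalIntegrable_of_Icc hM'.le).bernTilde_sub_mul (ℓ + 1) a)]
  exact integral_bernTilde_deriv_mul ℓ ha hM.le hg hg' fun x hx =>
    hasDerivAt_iteratedDerivWithin hf (mod_cast ℓ.lt_succ_self) hs (Icc_mem_nhds hx.1 hx.2)

lemma sum_Ico_eq_integral_sub_add_integral_bernTilde_one (ha : a ∈ Icc 0 1) (hM : M₁ < M₂)
    (hf : ContDiffOn ℝ 1 f (Icc M₁ M₂)) :
    ∑ m ∈ Finset.Ico M₁ M₂, f (m + a)
      = (∫ x in (M₁ : ℝ)..M₂, f x) - bern 1 a * (f M₁ - f M₂)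
        + ∫ x in (M₁ : ℝ)..M₂, bernTilde 1 (x - a) * iteratedDerivWithin 1 f (Icc M₁ M₂) x := by
  have key := integral_bernTilde_iteratedDerivWithin ha 0 hM (by simpa using hf)
  simp only [CharP.cast_eq_zero, zero_add, one_mul, bernTilde_zero, iteratedDerivWithin_zero,
    bern_eval_one, if_true, add_sub_cancel_left, bern_eval_one_sub, pow_one, neg_one_mul] at key
  linarith

lemma integral_bernTilde_iteratedDerivWithin_succ (ha : a ∈ Icc 0 1) {ℓ : ℕ} (hℓ : 1 ≤ ℓ)
    (hM : M₁ < M₂) (hf : ContDiffOn ℝ (ℓ + 1) f (Icc M₁ M₂)) :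
    (-1) ^ (ℓ + 1) / ℓ.factorial * ∫ x in (M₁ : ℝ)..M₂,
        bernTilde ℓ (x - a) * iteratedDerivWithin ℓ f (Icc M₁ M₂) x
      = -(bern (ℓ + 1) a / (ℓ + 1).factorial
          * (iteratedDerivWithin ℓ f (Icc M₁ M₂) M₁ - iteratedDerivWithin ℓ f (Icc M₁ M₂) M₂))
        + (-1) ^ (ℓ + 1 + 1) / (ℓ + 1).factorial * ∫ x in (M₁ : ℝ)..M₂,
          bernTilde (ℓ + 1) (x - a) * iteratedDerivWithin (ℓ + 1) f (Icc M₁ M₂) x := by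
  have key := integral_bernTilde_iteratedDerivWithin ha ℓ hM hf
  have hjump : bern (ℓ + 1) 1 - bern (ℓ + 1) 0 = 0 := by
    rw [bern_eval_one, if_neg (by omega), add_zero, sub_self]
  have hreflect : bern (ℓ + 1) a = (-1) ^ (ℓ + 1) * bern (ℓ + 1) (1 - a) := by
    simpa using bern_eval_one_sub (ℓ + 1) (1 - a)
  rw [hjump, zero_mul, zero_add] at key
  rw [hreflect, Nat.factorial_succ]
  push_cast
  field_simp
  linear_combination (-1) ^ (ℓ + 1) * key

end EulerMaclaurin

/-- Shifted Euler–Maclaurin formula. -/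
theorem stmt6 (a : ℝ) (ha : a ∈ Set.Icc (0:ℝ) 1) (L : ℕ) (hL : 1 ≤ L)
    (M₁ M₂ : ℤ) (hM : M₁ < M₂) (f : ℝ → ℝ)
    (hf : ContDiffOn ℝ L f (Set.Icc (M₁:ℝ) (M₂:ℝ))) :
    ∑ m ∈ Finset.Ico M₁ M₂, f ((m:ℝ) + a)
      = (∫ x in (M₁:ℝ)..(M₂:ℝ), f x)
        - ∑ m ∈ Finset.range L,
            bern (m+1) a / (Nat.factorial (m+1)) *
              (iteratedDerivWithin m f (Set.Icc (M₁:ℝ) (M₂:ℝ)) (M₁:ℝ)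
               - iteratedDerivWithin m f (Set.Icc (M₁:ℝ) (M₂:ℝ)) (M₂:ℝ))
        + (-1:ℝ)^(L+1) / (Nat.factorial L) *
            ∫ x in (M₁:ℝ)..(M₂:ℝ),
              bernTilde L (x - a) * iteratedDerivWithin L f (Set.Icc (M₁:ℝ) (M₂:ℝ)) x := by
  induction L, hL using Nat.le_induction with
  | base => simpa using sum_Ico_eq_integral_sub_add_integral_bernTilde_one ha hM hf
  | succ L hL ih =>
    rw [ih (hf.of_le (by norm_cast; omega)),
      integral_bernTilde_iteratedDerivWithin_succ ha hL hM (mod_cast hf), Finset.sum_range_succ]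
    ring
end
end

section
/- Let R ∈ ℕ. There exist a constant C depending only on R and an absolute constant C' such that for all k ∈ ℕ, all r ∈ {1,…,R}, and all h ∈ ℤ with gcd(h,k) = 1: |A_{R,r,h,k}| ≤ C (k² log(k) + δ_{k=1}) and |B_{R,r,h,k}| ≤ C' k². -/
open scoped Real
open Filter MeasureTheory

noncomputable section

/-- the sawtooth function `((x))` -/
def saw (x : ℝ) : ℝ := if Int.fract x = 0 then 0 else Int.fract x - 1/2

/-- the digamma function `ψ = Γ'/Γ` -/
def digamma (x : ℝ) : ℝ := deriv Real.Gamma x / Real.Gamma x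

/-- cotangent -/
def rcot (x : ℝ) : ℝ := Real.cos x / Real.sin x

/-- the constant `A_{R,r,h,k}` -/
def Acst (R r : ℕ) (h : ℤ) (k : ℕ) : ℂ :=
  -((k : ℂ) / (2*π*R)) * ∑ ℓ ∈ Finset.range k,
    (π * Complex.I * (saw (((h:ℝ)*((R:ℝ)*ℓ+r))/k) : ℝ)
     + (if ¬ (k ∣ (R*ℓ+r)) then
          (((1:ℝ)/2) * Real.log (4 * Real.sin (π*((h:ℝ)*((R:ℝ)*ℓ+r))/k)^2) : ℝ)
        else 0)
     + (if k ∣ (R*ℓ+r) then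
          ((Real.log (2*π*R/k) + digamma (((R:ℝ)*ℓ+r)/((R:ℝ)*k))) : ℝ)
        else 0))

/-- the constant `B_{R,r,h,k}` -/
def Bcst (R r : ℕ) (h : ℤ) (k : ℕ) : ℂ :=
  (1/2) * ∑ ℓ ∈ Finset.range k,
    ((((R:ℝ)*ℓ+r)/((R:ℝ)*k) - 1/2 : ℝ) : ℂ) *
    (1 - Complex.I * (if ¬ (k ∣ (R*ℓ+r)) then ((rcot (π*((h:ℝ)*((R:ℝ)*ℓ+r))/k) : ℝ) : ℂ) else 0))

/-!
For `k ∤ a`, the distance from `a / k` to the nearest integer is at least `1 / k`, so Jordan's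
inequality gives `|sin (π a / k)| ≥ 2 / k`; with `gcd (h, k) = 1` this applies to every term with
`k ∤ Rℓ + r`, and bounds its cotangent by `k / 2` and its logarithm by `log k`. When `k ∣ Rℓ + r`
the digamma argument is one of the `R` points `j / R`. Each of the `k` terms is thus `O_R(log k)`
for `A` and `O(k)` for `B`, and the prefactor of `A` is at most `k`.
-/

open Finset Real

lemma two_mul_abs_sub_round_le_abs_sin_pi_mul (x : ℝ) : 2 * |x - round x| ≤ |sin (π * x)| := by
  set y := x - round x
  have hy : |π * y| ≤ π / 2 := by
    rw [abs_mul, abs_of_pos pi_pos]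
    nlinarith [abs_sub_round x, pi_pos]
  have hsin : |sin (π * x)| = |sin (π * y)| := by
    rw [show π * x = π * y + round x * π by ring, sin_add_int_mul_pi, abs_mul, abs_neg_one_zpow,
      one_mul]
  have hjordan : 2 / π * |π * y| ≤ |sin (π * y)| := by
    rcases le_total 0 (π * y) with h | h
    · rw [abs_of_nonneg h]
      exact (mul_le_sin h (abs_le.mp hy).2).trans (le_abs_self _)
    · rw [abs_of_nonpos h, mul_neg]
      exact neg_le_neg (sin_le_mul (by linarith [(abs_le.mp hy).1]) h) |>.trans (neg_le_abs _)
  rw [hsin]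
  convert hjordan using 1
  rw [abs_mul, abs_of_pos pi_pos]
  field_simp

lemma inv_le_abs_div_sub_round {k : ℕ} (hk : 0 < k) {a : ℤ} (ha : ¬ (k : ℤ) ∣ a) :
    1 / (k : ℝ) ≤ |(a : ℝ) / k - round ((a : ℝ) / k)| := by
  have hk' : (0 : ℝ) < k := by exact_mod_cast hk
  have hne : a - round ((a : ℝ) / k) * k ≠ 0 := fun h =>
    ha ⟨round ((a : ℝ) / k), by linear_combination h⟩
  have hone : (1 : ℝ) ≤ |(a : ℝ) - round ((a : ℝ) / k) * k| := by
    exact_mod_cast Int.one_le_abs hne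
  rw [show (a : ℝ) / k - round ((a : ℝ) / k) = ((a : ℝ) - round ((a : ℝ) / k) * k) / k by
    field_simp, abs_div, abs_of_pos hk']
  gcongr

lemma two_div_le_abs_sin_pi_mul_div {k : ℕ} (hk : 0 < k) {a : ℤ} (ha : ¬ (k : ℤ) ∣ a) :
    2 / (k : ℝ) ≤ |sin (π * a / k)| := by
  calc 2 / (k : ℝ) = 2 * (1 / k) := by ring
    _ ≤ 2 * |(a : ℝ) / k - round ((a : ℝ) / k)| := by gcongr; exact inv_le_abs_div_sub_round hk ha
    _ ≤ |sin (π * a / k)| := by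
      simpa only [mul_div_assoc] using two_mul_abs_sub_round_le_abs_sin_pi_mul ((a : ℝ) / k)

lemma not_dvd_mul_of_gcd_eq_one {k m : ℕ} {h : ℤ} (hco : Int.gcd h k = 1) (hm : ¬ k ∣ m) :
    ¬ (k : ℤ) ∣ h * m := fun hdvd =>
  hm <| Int.natCast_dvd_natCast.mp <|
    (Int.isCoprime_iff_gcd_eq_one.mpr (by rwa [Int.gcd_comm])).dvd_of_dvd_mul_left hdvd

lemma two_div_le_abs_sin_pi_mul_mul_div {k m : ℕ} {h : ℤ} (hk : 0 < k)
    (hco : Int.gcd h k = 1) (hm : ¬ k ∣ m) : 2 / (k : ℝ) ≤ |sin (π * ((h : ℝ) * m) / k)| := by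
  simpa using two_div_le_abs_sin_pi_mul_div hk (not_dvd_mul_of_gcd_eq_one hco hm)

lemma abs_rcot_le {θ k : ℝ} (hk : 0 < k) (hθ : 2 / k ≤ |sin θ|) : |rcot θ| ≤ k / 2 := by
  rw [rcot, abs_div]
  calc |cos θ| / |sin θ| ≤ 1 / (2 / k) :=
        div_le_div₀ zero_le_one (abs_cos_le_one θ) (by positivity) hθ
    _ = k / 2 := by field_simp

lemma abs_half_mul_log_four_mul_sin_sq_le {θ k : ℝ} (hk : 0 < k) (hθ : 2 / k ≤ |sin θ|) :
    |1 / 2 * log (4 * sin θ ^ 2)| ≤ log k := by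
  have hs : 0 < 2 * |sin θ| := by linarith [show 0 < 2 / k by positivity]
  have hhalf : 1 / 2 * log (4 * sin θ ^ 2) = log (2 * |sin θ|) := by
    rw [← sq_abs, show 4 * |sin θ| ^ 2 = (2 * |sin θ|) ^ 2 by ring, log_pow]
    ring
  have hk2 : 2 ≤ k := by
    have := abs_sin_le_one θ
    rw [div_le_iff₀ hk] at hθ
    nlinarith
  rw [hhalf, abs_le]
  constructor
  · calc -log k ≤ log 4 - log k := by linarith [log_nonneg (by norm_num : (1 : ℝ) ≤ 4)]
      _ = log (4 / k) := (log_div (by norm_num) hk.ne').symm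
      _ ≤ log (2 * |sin θ|) :=
        log_le_log (by positivity) (by rw [show 4 / k = 2 * (2 / k) by ring]; linarith)
  · calc log (2 * |sin θ|) ≤ log 2 := log_le_log hs (by linarith [abs_sin_le_one θ])
      _ ≤ log k := log_le_log two_pos hk2

lemma norm_sum_range_le_mul {E : Type*} [SeminormedAddCommGroup E] {f : ℕ → E} {k : ℕ} {B : ℝ}
    (hf : ∀ ℓ < k, ‖f ℓ‖ ≤ B) : ‖∑ ℓ ∈ range k, f ℓ‖ ≤ k * B := by
  simpa using norm_sum_le_of_le (range k) fun ℓ hℓ => hf ℓ (mem_range.mp hℓ)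

lemma abs_div_sub_half_le {x y : ℝ} (hx : 0 ≤ x) (hxy : x ≤ y) : |x / y - 1 / 2| ≤ 1 / 2 := by
  have : 0 ≤ x / y := div_nonneg hx (hx.trans hxy)
  have : x / y ≤ 1 := div_le_one_of_le₀ hxy (hx.trans hxy)
  rw [abs_le]; constructor <;> linarith

lemma natCast_mul_add_le_mul {R r k ℓ : ℕ} (hr : r ≤ R) (hℓ : ℓ < k) :
    (R : ℝ) * ℓ + r ≤ R * k := by
  have : R * ℓ + r ≤ R * k := by nlinarith
  exact_mod_cast this

lemma norm_Bcst_le {R r k : ℕ} {h : ℤ} (hk : 0 < k) (hr : r ≤ R) (hco : Int.gcd h k = 1) :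
    ‖Bcst R r h k‖ ≤ k ^ 2 := by
  have hk' : (1 : ℝ) ≤ k := by exact_mod_cast hk
  have hterm : ∀ ℓ < k, ‖((((R : ℝ) * ℓ + r) / ((R : ℝ) * k) - 1 / 2 : ℝ) : ℂ) *
      (1 - Complex.I * (if ¬ (k ∣ (R * ℓ + r)) then
        ((rcot (π * ((h : ℝ) * ((R : ℝ) * ℓ + r)) / k) : ℝ) : ℂ) else 0))‖ ≤
      1 / 2 * (1 + k / 2) := by
    intro ℓ hℓ
    rw [norm_mul, Complex.norm_real, Real.norm_eq_abs]
    gcongr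
    · exact abs_div_sub_half_le (by positivity) (natCast_mul_add_le_mul hr hℓ)
    · refine (norm_sub_le _ _).trans ?_
      rw [norm_one, norm_mul, Complex.norm_I, one_mul]
      gcongr
      split_ifs with hdvd
      · rw [norm_zero]; positivity
      · rw [Complex.norm_real, Real.norm_eq_abs]
        exact abs_rcot_le (by positivity)
          (by exact_mod_cast two_div_le_abs_sin_pi_mul_mul_div hk hco hdvd)
  calc ‖Bcst R r h k‖ ≤ 1 / 2 * (k * (1 / 2 * (1 + k / 2))) := by
        rw [Bcst, norm_mul]
        gcongr
        · norm_num
        · exact norm_sum_range_le_mul hterm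
    _ ≤ k ^ 2 := by nlinarith

lemma abs_saw_le (x : ℝ) : |saw x| ≤ 1 / 2 := by
  rw [saw]
  split_ifs
  · norm_num
  · rw [abs_le]; constructor <;> linarith [Int.fract_nonneg x, Int.fract_lt_one x]

lemma abs_digamma_le_sum {R r k ℓ : ℕ} (hr1 : 1 ≤ r) (hr : r ≤ R) (hℓ : ℓ < k)
    (hdvd : k ∣ R * ℓ + r) :
    |digamma (((R * ℓ + r : ℕ) : ℝ) / ((R : ℝ) * k))| ≤ ∑ j ∈ Icc 1 R, |digamma (j / R)| := by
  obtain ⟨j, hj⟩ := hdvd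
  have hj1 : 1 ≤ j := by nlinarith
  have hjR : j ≤ R := by nlinarith
  have hk : (k : ℝ) ≠ 0 := Nat.cast_ne_zero.mpr (by omega)
  rw [hj, Nat.cast_mul, mul_comm (R : ℝ), mul_div_mul_left _ _ hk]
  exact single_le_sum (f := fun j : ℕ => |digamma (j / R)|) (fun _ _ => abs_nonneg _)
    (mem_Icc.mpr ⟨hj1, hjR⟩)

def acstConst (R : ℕ) : ℝ := π / 2 + log (2 * π * R) + ∑ j ∈ Icc 1 R, |digamma (j / R)|

lemma norm_Acst_term_le {R r k ℓ : ℕ} {h : ℤ} (hk : 0 < k) (hr1 : 1 ≤ r) (hr : r ≤ R)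
    (hℓ : ℓ < k) (hco : Int.gcd h k = 1) :
    ‖π * Complex.I * (saw (((h:ℝ)*((R:ℝ)*ℓ+r))/k) : ℝ)
      + (if ¬ (k ∣ (R*ℓ+r)) then
          (((1:ℝ)/2) * Real.log (4 * Real.sin (π*((h:ℝ)*((R:ℝ)*ℓ+r))/k)^2) : ℝ)
        else 0)
      + (if k ∣ (R*ℓ+r) then
          ((Real.log (2*π*R/k) + digamma (((R:ℝ)*ℓ+r)/((R:ℝ)*k))) : ℝ)
        else 0)‖ ≤
      acstConst R + log k := by
  have hR : (1 : ℝ) ≤ R := by exact_mod_cast hr1.trans hr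
  have hk' : (1 : ℝ) ≤ k := by exact_mod_cast hk
  have hsaw (x : ℝ) : ‖(π : ℂ) * Complex.I * (saw x : ℂ)‖ ≤ π / 2 := by
    rw [norm_mul, norm_mul, Complex.norm_I, Complex.norm_real, Complex.norm_real,
      Real.norm_of_nonneg pi_pos.le, Real.norm_eq_abs]
    nlinarith [abs_saw_le x, pi_pos]
  have h2πR : 0 ≤ log (2 * π * R) := log_nonneg (by nlinarith [pi_gt_three])
  rw [show (R : ℝ) * ℓ + r = ((R * ℓ + r : ℕ) : ℝ) by push_cast; ring]
  split_ifs with hdvd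
  · set ψ := digamma (((R * ℓ + r : ℕ) : ℝ) / (R * k))
    have hψ : |ψ| ≤ ∑ j ∈ Icc 1 R, |digamma (j / R)| := abs_digamma_le_sum hr1 hr hℓ hdvd
    have hlog : |log (2 * π * R / k)| ≤ log (2 * π * R) + log k := by
      rw [log_div (by positivity) (by positivity), abs_le]
      constructor <;> linarith [log_nonneg hk']
    calc _ ≤ π / 2 + |log (2 * π * R / k) + ψ| := by
          rw [Complex.ofReal_zero, add_zero]
          exact (norm_add_le _ _).trans (add_le_add (hsaw _) (Complex.norm_real _).le)
      _ ≤ _ := by unfold acstConst; linarith [abs_add_le (log (2 * π * R / k)) ψ]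
  · have hψ : 0 ≤ ∑ j ∈ Icc 1 R, |digamma (j / R)| := sum_nonneg fun _ _ => abs_nonneg _
    have hlog := abs_half_mul_log_four_mul_sin_sq_le (by positivity)
      (two_div_le_abs_sin_pi_mul_mul_div hk hco hdvd)
    calc _ ≤ π / 2 + |1 / 2 * log (4 * sin (π * (h * ((R * ℓ + r : ℕ) : ℝ)) / k) ^ 2)| := by
          rw [Complex.ofReal_zero, add_zero]
          exact (norm_add_le _ _).trans (add_le_add (hsaw _) (Complex.norm_real _).le)
      _ ≤ _ := by unfold acstConst; linarith

lemma acstConst_nonneg {R : ℕ} (hR : 1 ≤ R) : 0 ≤ acstConst R := by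
  have : (1 : ℝ) ≤ R := by exact_mod_cast hR
  have := log_nonneg (show 1 ≤ 2 * π * R by nlinarith [pi_gt_three])
  have := pi_pos
  unfold acstConst
  positivity

lemma norm_Acst_le {R r k : ℕ} {h : ℤ} (hk : 0 < k) (hr1 : 1 ≤ r) (hr : r ≤ R)
    (hco : Int.gcd h k = 1) : ‖Acst R r h k‖ ≤ k ^ 2 * (acstConst R + log k) := by
  have hR : (1 : ℝ) ≤ R := by exact_mod_cast hr1.trans hr
  have hprefactor : ‖-((k : ℂ) / (2 * π * R))‖ ≤ k := by
    rw [norm_neg, norm_div, Complex.norm_natCast,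
      show (2 * π * R : ℂ) = ((2 * π * R : ℝ) : ℂ) by push_cast; ring, Complex.norm_real,
      Real.norm_of_nonneg (by positivity)]
    exact div_le_self (by positivity) (by nlinarith [pi_gt_three])
  have hsum := norm_sum_range_le_mul fun ℓ hℓ => norm_Acst_term_le (h := h) hk hr1 hr hℓ hco
  rw [Acst, norm_mul]
  calc _ ≤ (k : ℝ) * (k * (acstConst R + log k)) :=
        mul_le_mul hprefactor hsum (norm_nonneg _) (by positivity)
    _ = _ := by ring

lemma sq_mul_add_log_le {c : ℝ} (hc : 0 ≤ c) {k : ℕ} (hk : 1 ≤ k) :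
    (k : ℝ) ^ 2 * (c + log k) ≤ (2 * c + 1) * ((k : ℝ) ^ 2 * log k + if k = 1 then 1 else 0) := by
  rcases hk.eq_or_lt with rfl | hk2
  · simp only [Nat.cast_one, one_pow, log_one, if_true, one_mul, mul_zero, zero_add, add_zero,
      mul_one]
    linarith
  · rw [if_neg hk2.ne', add_zero]
    -- `log k ≥ log 2 > 1/2` absorbs the constant `c` into `c * log k`
    have : 1 / 2 ≤ log k := (by linarith [log_two_gt_d9] : 1 / 2 ≤ log 2).trans
      (log_le_log two_pos (by exact_mod_cast hk2))
    have : c + log k ≤ (2 * c + 1) * log k := by nlinarith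
    nlinarith [sq_nonneg (k : ℝ)]

theorem stmt14_general (R : ℕ) :
    (∃ C : ℝ, ∀ k : ℕ, 1 ≤ k → ∀ r : ℕ, 1 ≤ r → r ≤ R → ∀ h : ℤ, Int.gcd h k = 1 →
        ‖Acst R r h k‖ ≤ C * ((k:ℝ)^2 * Real.log k + if k = 1 then 1 else 0))
    ∧ (∃ C' : ℝ, ∀ R' : ℕ, 1 ≤ R' → ∀ k : ℕ, 1 ≤ k → ∀ r : ℕ, 1 ≤ r → r ≤ R' →
        ∀ h : ℤ, Int.gcd h k = 1 →
          ‖Bcst R' r h k‖ ≤ C' * (k:ℝ)^2) := by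
  refine ⟨⟨2 * acstConst R + 1, fun k hk r hr1 hr h hco => ?_⟩,
    ⟨1, fun R' _ k hk r _ hr h hco => ?_⟩⟩
  · exact (norm_Acst_le hk hr1 hr hco).trans
      (sq_mul_add_log_le (acstConst_nonneg (hr1.trans hr)) hk)
  · simpa using norm_Bcst_le hk hr hco

/-- Lemma `alpha_beta_bounds`: `A_{R,r,h,k} ≪_R k² log k + δ_{k=1}` and
`B_{R,r,h,k} ≪ k²`. -/
theorem stmt14 (R : ℕ) (hR : 1 ≤ R) :
    (∃ C : ℝ, ∀ k : ℕ, 1 ≤ k → ∀ r : ℕ, 1 ≤ r → r ≤ R → ∀ h : ℤ, Int.gcd h k = 1 →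
        ‖Acst R r h k‖ ≤ C * ((k:ℝ)^2 * Real.log k + if k = 1 then 1 else 0))
    ∧ (∃ C' : ℝ, ∀ R' : ℕ, 1 ≤ R' → ∀ k : ℕ, 1 ≤ k → ∀ r : ℕ, 1 ≤ r → r ≤ R' →
        ∀ h : ℤ, Int.gcd h k = 1 →
          ‖Bcst R' r h k‖ ≤ C' * (k:ℝ)^2) :=
  stmt14_general R
end
end

section
/- For k ∈ ℕ and ν ∈ ℤ with k ∤ ν: ∫₀^∞ 1/(ζ_k^{−ν} e^x − 1) dx = −πi((ν/k)) − (1/2) log(4 sin²(πν/k)). -/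
open scoped Real
open Filter MeasureTheory

noncomputable section

/-!
For `w = ζ_k^ν` the integrand equals `w e^{-x} / (1 - w e^{-x})`, the derivative of
`log (1 - w e^{-x})`. As `Re w < 1`, the path `1 - w e^{-x}` stays in the right half-plane, so the
integral is `-log (1 - w)`. With `t = fract (ν / k) ∈ (0, 1)`,
`1 - e^{2πit} = 2 sin (πt) · e^{iπ(t - 1/2)}`, whose modulus and argument give the two terms.
-/

open Complex Set Topology

lemma exp_two_pi_I_mul_fract (x : ℝ) :
    exp (2 * π * I * x) = exp (2 * π * I * Int.fract x) := by
  conv_lhs => rw [← Int.floor_add_fract x]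
  push_cast
  rw [mul_add, exp_add, mul_comm (2 * π * I), exp_int_mul_two_pi_mul_I, one_mul]

lemma re_exp_two_pi_I_mul_lt_one {x : ℝ} (hx : Int.fract x ≠ 0) :
    (exp (2 * π * I * x)).re < 1 := by
  rw [show 2 * π * I * x = ((2 * π * x : ℝ) : ℂ) * I by push_cast; ring, exp_ofReal_mul_I_re]
  refine (Real.cos_le_one _).lt_of_ne fun h => hx ?_
  obtain ⟨n, hn⟩ := (Real.cos_eq_one_iff _).1 h
  rw [show x = n by nlinarith [Real.pi_pos], Int.fract_intCast]

lemma log_norm_one_sub_exp_two_pi_I_mul (x : ℝ) :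
    Real.log ‖1 - exp (2 * π * I * x)‖ = 1 / 2 * Real.log (4 * Real.sin (π * x) ^ 2) := by
  have hsq : 4 * Real.sin (π * x) ^ 2 = ‖2 * Real.sin (2 * π * x / 2)‖ ^ 2 := by
    rw [Real.norm_eq_abs, sq_abs]; ring_nf
  rw [norm_sub_rev, show 2 * π * I * x = I * ((2 * π * x : ℝ) : ℂ) by push_cast; ring,
    norm_exp_I_mul_ofReal_sub_one, hsq, Real.log_pow]
  push_cast
  ring

lemma arg_one_sub_exp_two_pi_I_mul (x : ℝ) :
    arg (1 - exp (2 * π * I * x)) = π * saw x := by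
  rw [exp_two_pi_I_mul_fract, saw]
  set t := Int.fract x
  split_ifs with ht
  · simp [ht]
  have ht0 : 0 < t := (Int.fract_nonneg x).lt_of_ne' ht
  have ht1 : t < 1 := Int.fract_lt_one x
  have hsin : 0 < Real.sin (π * t) :=
    Real.sin_pos_of_pos_of_lt_pi (by positivity) (by nlinarith [Real.pi_pos])
  have hpolar : 1 - exp (2 * π * I * t) = ((2 * Real.sin (π * t) : ℝ) : ℂ) *
      (Real.cos (π * t - π / 2) + Real.sin (π * t - π / 2) * I) := by
    rw [show 2 * π * I * t = ((2 * (π * t) : ℝ) : ℂ) * I by push_cast; ring, exp_mul_I,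
      ← ofReal_cos, ← ofReal_sin, Real.cos_sub_pi_div_two, Real.sin_sub_pi_div_two,
      Real.cos_two_mul, Real.sin_two_mul]
    push_cast
    linear_combination (-2 : ℂ) * sin_sq_add_cos_sq ((π : ℂ) * t)
  rw [hpolar, arg_real_mul _ (by positivity), ofReal_cos, ofReal_sin,
    arg_cos_add_sin_mul_I ⟨by nlinarith [Real.pi_pos], by nlinarith [Real.pi_pos]⟩]
  ring

theorem log_one_sub_exp_two_pi_I_mul (x : ℝ) :
    log (1 - exp (2 * π * I * x)) =
      1 / 2 * Real.log (4 * Real.sin (π * x) ^ 2) + π * saw x * I := by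
  rw [← re_add_im (log _), log_re, log_im, log_norm_one_sub_exp_two_pi_I_mul,
    arg_one_sub_exp_two_pi_I_mul]
  push_cast
  ring

lemma min_one_one_sub_re_le_re_one_sub_mul (w : ℂ) {s : ℝ} (hs0 : 0 ≤ s) (hs1 : s ≤ 1) :
    min 1 (1 - w.re) ≤ (1 - s * w).re := by
  simp only [sub_re, one_re, re_ofReal_mul]
  rcases le_total w.re 0 with h | h
  · exact (min_le_left _ _).trans (by nlinarith)
  · exact (min_le_right _ _).trans (by nlinarith)

theorem integral_Ioi_mul_exp_neg_div_one_sub_mul_exp_neg {w : ℂ} (hw : w.re < 1) :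
    ∫ x in Ioi (0 : ℝ), w * exp (-x) / (1 - w * exp (-x)) = -log (1 - w) := by
  set g : ℝ → ℂ := fun x => 1 - w * exp (-x)
  have hg : ∀ x : ℝ, g x = 1 - (Real.exp (-x) : ℂ) * w := fun x => by simp [g, mul_comm]
  set c := min 1 (1 - w.re)
  have hc : 0 < c := lt_min one_pos (by linarith)
  have hgre : ∀ x ∈ Ici (0 : ℝ), c ≤ (g x).re := fun x hx =>
    hg x ▸ min_one_one_sub_re_le_re_one_sub_mul w (Real.exp_pos _).le
      (Real.exp_le_one_iff.2 (neg_nonpos.2 hx))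
  have hg0 : ∀ x ∈ Ici (0 : ℝ), g x ≠ 0 := fun x hx h => by
    have := hgre x hx; rw [h, zero_re] at this; linarith
  have hderiv :
      ∀ x ∈ Ici (0 : ℝ), HasDerivAt (fun x => log (g x)) (w * exp (-x) / g x) x := by
    intro x hx
    have hdg : HasDerivAt g (w * exp (-x)) x := by
      simpa using (((hasDerivAt_id x).ofReal_comp.neg.cexp).const_mul w).const_sub 1
    exact hdg.clog_real (Or.inl (hc.trans_le (hgre x hx)))
  have hint : IntegrableOn (fun x : ℝ => w * exp (-x) / g x) (Ioi 0) := by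
    refine Integrable.mono' ((integrableOn_exp_neg_Ioi 0).const_mul (‖w‖ / c)) ?_ ?_
    · refine ContinuousOn.aestronglyMeasurable ?_ measurableSet_Ioi
      exact ContinuousOn.div (by fun_prop) (by fun_prop) fun x hx => hg0 x (Ioi_subset_Ici_self hx)
    · filter_upwards [self_mem_ae_restrict measurableSet_Ioi] with x hx
      have hgc : c ≤ ‖g x‖ := (hgre x (Ioi_subset_Ici_self hx)).trans (re_le_norm _)
      rw [norm_div, norm_mul, norm_exp, neg_re, ofReal_re, div_mul_eq_mul_div]
      exact div_le_div_of_nonneg_left (by positivity) hc hgc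
  have hlim : Tendsto (fun x => log (g x)) atTop (𝓝 0) := by
    have : Tendsto g atTop (𝓝 1) := by
      rw [funext hg]
      simpa using ((continuous_ofReal.tendsto 0).comp
        Real.tendsto_exp_neg_atTop_nhds_zero).mul_const w |>.const_sub 1
    rw [← log_one]
    exact (continuousAt_clog one_mem_slitPlane).tendsto.comp this
  rw [integral_Ioi_of_hasDerivAt_of_tendsto' hderiv hint hlim]
  simp [g]

lemma fract_intCast_div_natCast_ne_zero {k : ℕ} (hk : 1 ≤ k) {ν : ℤ}
    (hν : ¬ (k : ℤ) ∣ ν) :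
    Int.fract ((ν : ℝ) / k) ≠ 0 := by
  rintro h
  obtain ⟨n, hn⟩ := Int.fract_eq_zero_iff.1 h
  refine hν ⟨n, ?_⟩
  have hk0 : (k : ℝ) ≠ 0 := by positivity
  rw [eq_div_iff hk0] at hn
  exact_mod_cast (by linarith : (ν : ℝ) = k * n)

/-- for `k ∈ ℕ`, `ν ∈ ℤ` with `k ∤ ν`,
`∫₀^∞ 1/(ζ_k^{−ν} e^x − 1) dx = −πi((ν/k)) − (1/2) log(4 sin²(πν/k))`. -/
theorem stmt17 (k : ℕ) (hk : 1 ≤ k) (ν : ℤ) (hν : ¬ ((k : ℤ) ∣ ν)) :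
    (∫ x in Set.Ioi (0:ℝ), (1 : ℂ) / (Complex.exp (-(2*π*Complex.I*ν)/k) * Complex.exp (x:ℂ) - 1))
      = -(π * Complex.I * saw ((ν : ℝ)/k)) - (1/2) * Real.log (4 * Real.sin (π*ν/k)^2) := by
  set w := exp (2 * π * I * ((ν : ℝ) / k : ℝ))
  have hζ : exp (-(2 * π * I * ν) / k) = w⁻¹ := by
    rw [← exp_neg]; push_cast; ring_nf
  have hw : w ≠ 0 := exp_ne_zero _
  have hintegrand : ∀ x : ℝ, 1 / (w⁻¹ * exp x - 1) = w * exp (-x) / (1 - w * exp (-x)) := by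
    intro x
    rw [exp_neg, show w⁻¹ * exp x - 1 = (w * (exp x)⁻¹)⁻¹ * (1 - w * (exp x)⁻¹) by
      field_simp [exp_ne_zero], one_div, mul_inv, inv_inv, div_eq_mul_inv]
  simp_rw [hζ, hintegrand]
  rw [integral_Ioi_mul_exp_neg_div_one_sub_mul_exp_neg
      (re_exp_two_pi_I_mul_lt_one (fract_intCast_div_natCast_ne_zero hk hν)),
    log_one_sub_exp_two_pi_I_mul, mul_div_assoc]
  ring
end
end
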